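/- Fix an integer G ≥ 1, a nonempty finite set M (memory states), a nonempty set J̃ ⊆ [0,∞), and integers d_1,…,d_G ≥ 2. For each a ∈ {1,…,G} let γ^{(a)}: M → J̃^{d_a} be a parameter-update function with components γ^{(a)}_i(m) ∈ J̃ for i ∈ {0,…,d_a−1}, and let u: M × {1,…,G} × (⋃_a {0,…,d_a−1}) → M be an arbitrary memory-update function. Consider the continuous-time Markov chain on the finite state space V = ({0,…,d_1−1} × ⋯ × {0,…,d_G−1}) × M whose only nonzero jump rates are, for each a and each (c,m) ∈ V, a jump from (c,m) to (c with its a-th component replaced by c_a + 1 mod d_a, u(m,a,c_a)) at rate γ^{(a)}_{c_a}(m) (for distinct a these target states are distinct, so the rate matrix is well defined); the escape rate from (c,m) is Γ_{(c,m)} = Σ_{a=1}^G γ^{(a)}_{c_a}(m). Let p be any stationary distribution of this chain, let w be arbitrary real weights on the jumps, and let F, D and S = F²/D be the asymptotic average current, noise and signal-to-noise ratio (assume the improper integral defining D converges entrywise and D > 0). Then S ≤ max_{m∈M} max_{i ∈ {0,…,d_1−1}×⋯×{0,…,d_G−1}} Σ_{a=1}^G γ^{(a)}_{i_a}(m). 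-/

import Mathlib

open Matrix MeasureTheory

/-- The rate matrix of a continuous-time Markov chain with off-diagonal entries
`R j i` (the rate of jumps from state `i` to state `j`, for `j ≠ i`) and diagonal
entries minus the escape rates `Γ_i = Σ_{j ≠ i} R j i`. -/
noncomputable def ctmcRateMatrix {V : Type} [Fintype V] [DecidableEq V]
    (R : V → V → ℝ) : Matrix V V ℝ :=
  Matrix.of fun j i => if j = i then -(∑ k, if k = i then (0 : ℝ) else R k i) else R j i

/-- The matrix `C` with entries `C j i = w j i * R j i` off the diagonal and zero diagonal. -/
noncomputable def ctmcCurrentMatrix {V : Type} [Fintype V] [DecidableEq V]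
    (R w : V → V → ℝ) : Matrix V V ℝ :=
  Matrix.of fun j i => if j = i then 0 else w j i * R j i

/-- The asymptotic average current `F = 1ᵀ C p`. -/
noncomputable def ctmcAvgCurrent {V : Type} [Fintype V] [DecidableEq V]
    (R w : V → V → ℝ) (p : V → ℝ) : ℝ :=
  (fun _ => (1 : ℝ)) ⬝ᵥ (ctmcCurrentMatrix R w *ᵥ p)

/-- The integrand `e^{Lτ} − p·1ᵀ` of the improper integral appearing in the noise. -/
noncomputable def ctmcNoiseIntegrand {V : Type} [Fintype V] [DecidableEq V]
    (R : V → V → ℝ) (p : V → ℝ) (τ : ℝ) : Matrix V V ℝ :=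
  NormedSpace.exp (τ • ctmcRateMatrix R) - Matrix.vecMulVec p (fun _ => 1)

/-- Entrywise convergence of the improper integral `∫₀^∞ (e^{Lτ} − p·1ᵀ) dτ`. -/
def ctmcNoiseConv {V : Type} [Fintype V] [DecidableEq V]
    (R : V → V → ℝ) (p : V → ℝ) : Prop :=
  ∀ j i, IntegrableOn (fun τ : ℝ => ctmcNoiseIntegrand R p τ j i) (Set.Ioi 0)

/-- The matrix `∫₀^∞ (e^{Lτ} − p·1ᵀ) dτ`, computed entrywise. -/
noncomputable def ctmcNoiseQ {V : Type} [Fintype V] [DecidableEq V]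
    (R : V → V → ℝ) (p : V → ℝ) : Matrix V V ℝ :=
  Matrix.of fun j i => ∫ τ in Set.Ioi (0 : ℝ), ctmcNoiseIntegrand R p τ j i

/-- The asymptotic noise `D = 1ᵀ C₂ p + 2·1ᵀ C (∫₀^∞ (e^{Lτ} − p·1ᵀ) dτ) C p`. -/
noncomputable def ctmcNoise {V : Type} [Fintype V] [DecidableEq V]
    (R w : V → V → ℝ) (p : V → ℝ) : ℝ :=
  (fun _ => (1 : ℝ)) ⬝ᵥ (ctmcCurrentMatrix R (fun j i => w j i ^ 2) *ᵥ p)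
    + 2 * ((fun _ => (1 : ℝ)) ⬝ᵥ (ctmcCurrentMatrix R w *ᵥ
        (ctmcNoiseQ R p *ᵥ (ctmcCurrentMatrix R w *ᵥ p))))

/-!
The bound is the kinetic uncertainty relation `F² ≤ A D` for the dynamical activity
`A = Σᵢ Γᵢ pᵢ`, together with `A ≤ maxᵢ Γᵢ` and the fact that the clockwork leaves `(c, m)` at total
rate at most `Σₐ γ⁽ᵃ⁾_{cₐ}(m)`.

For the uncertainty relation, `y = Q C p` solves the Poisson equation `L y = F p - C p`, has total
mass zero and vanishes off the support of `p`, so `y = p x` for some `x`. In terms of the stationary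
fluxes `q_{ji} = R_{ji} pᵢ`, which are balanced, this turns the noise into the Dirichlet-type sum
`D = Σ q_{ji} (w_{ji} + xᵢ - xⱼ)²`, while `F = Σ q_{ji} w_{ji} = Σ q_{ji} (w_{ji} + xᵢ - xⱼ)`.
Cauchy–Schwarz with weights `q` then gives `F² ≤ (Σ q) D = A D`.
-/

section MatrixExp

open NormedSpace

variable {V : Type*} [Fintype V] [DecidableEq V]

theorem Matrix.hasSum_exp_mulVec (M : Matrix V V ℝ) (v : V → ℝ) :
    HasSum (fun n : ℕ => (n.factorial : ℝ)⁻¹ • (M ^ n *ᵥ v)) (exp M *ᵥ v) := by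
  let _ : NormedRing (Matrix V V ℝ) := Matrix.linftyOpNormedRing
  let _ : NormedAlgebra ℝ (Matrix V V ℝ) := Matrix.linftyOpNormedAlgebra
  have := (exp_series_hasSum_exp' (𝕂 := ℝ) M).map ((mulVecBilin ℝ ℝ).flip v)
    (continuous_id.matrix_mulVec continuous_const)
  simp only [Function.comp_def, LinearMap.flip_apply, mulVecBilin_apply, smul_mulVec] at this
  exact this

theorem Matrix.exp_mulVec_mem {S : Submodule ℝ (V → ℝ)} {M : Matrix V V ℝ}
    (hM : ∀ z ∈ S, M *ᵥ z ∈ S) {v : V → ℝ} (hv : v ∈ S) : exp M *ᵥ v ∈ S := by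
  rw [← (M.hasSum_exp_mulVec v).tsum_eq]
  refine tsum_mem S.closed_of_finiteDimensional fun n => S.smul_mem _ ?_
  induction n with
  | zero => simpa using hv
  | succ n ih => rw [pow_succ', ← mulVec_mulVec]; exact hM _ ih

theorem Matrix.exp_mulVec_of_mulVec_eq_zero {M : Matrix V V ℝ} {v : V → ℝ} (hv : M *ᵥ v = 0) :
    exp M *ᵥ v = v := by
  refine (M.hasSum_exp_mulVec v).unique (hasSum_single 0 fun n hn => ?_) |>.trans (by simp)
  obtain ⟨k, rfl⟩ := Nat.exists_eq_succ_of_ne_zero hn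
  simp [pow_succ, ← mulVec_mulVec, hv]

theorem Matrix.hasDerivAt_exp_smul_mulVec (L : Matrix V V ℝ) (v : V → ℝ) (t : ℝ) :
    HasDerivAt (fun τ : ℝ => exp (τ • L) *ᵥ v) (L *ᵥ (exp (t • L) *ᵥ v)) t := by
  let _ : NormedRing (Matrix V V ℝ) := Matrix.linftyOpNormedRing
  let _ : NormedAlgebra ℝ (Matrix V V ℝ) := Matrix.linftyOpNormedAlgebra
  let φ : Matrix V V ℝ →L[ℝ] V → ℝ := LinearMap.toContinuousLinearMap ((mulVecBilin ℝ ℝ).flip v)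
  have := φ.hasFDerivAt.comp_hasDerivAt t (hasDerivAt_exp_smul_const' L t)
  simp only [φ, Function.comp_def, LinearMap.coe_toContinuousLinearMap', LinearMap.flip_apply,
    mulVecBilin_apply] at this
  rw [mulVec_mulVec]
  exact this

end MatrixExp

theorem MeasureTheory.integral_mem_submodule {α E : Type*} [MeasurableSpace α] {μ : Measure α}
    [NormedAddCommGroup E] [NormedSpace ℝ E] [CompleteSpace E] [FiniteDimensional ℝ E]
    (S : Submodule ℝ E) {f : α → E} (hf : Integrable f μ) (hS : ∀ x, f x ∈ S) :
    ∫ x, f x ∂μ ∈ S := by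
  refine (Subspace.forall_mem_dualAnnihilator_apply_eq_zero_iff S _).1 fun φ hφ => ?_
  rw [← LinearMap.coe_toContinuousLinearMap' φ, ← φ.toContinuousLinearMap.integral_comp_comm hf]
  simp [(S.mem_dualAnnihilator φ).1 hφ _ (hS _)]

section BalancedFlux

-- `q j i` is the flux from `i` to `j`; `hbal` below says that inflow equals outflow everywhere.
variable {V : Type*} [Fintype V] (q : V → V → ℝ)

theorem sum_sum_flux_mul_source (f : V → ℝ) :
    ∑ j, ∑ i, q j i * f i = ∑ j, (∑ i, q i j) * f j := by
  rw [Finset.sum_comm]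
  simp only [Finset.sum_mul]

variable {q}

theorem sum_sum_flux_mul_target (hbal : ∀ j, ∑ i, q j i = ∑ i, q i j) (f : V → ℝ) :
    ∑ j, ∑ i, q j i * f j = ∑ j, (∑ i, q i j) * f j := by
  simp only [← hbal, Finset.sum_mul]

theorem sum_sum_flux_mul_sub_eq_zero (hbal : ∀ j, ∑ i, q j i = ∑ i, q i j) (x : V → ℝ) :
    ∑ j, ∑ i, q j i * (x i - x j) = 0 := by
  simp only [mul_sub, Finset.sum_sub_distrib, sum_sum_flux_mul_source,
    sum_sum_flux_mul_target hbal, sub_self]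

theorem sum_sum_flux_mul_sub_sq (hbal : ∀ j, ∑ i, q j i = ∑ i, q i j) (x : V → ℝ) :
    ∑ j, ∑ i, q j i * (x i - x j) ^ 2 =
      2 * ∑ j, x j * ((∑ i, q i j) * x j - ∑ i, q j i * x i) := by
  calc ∑ j, ∑ i, q j i * (x i - x j) ^ 2
      = ∑ j, ∑ i, q j i * x i ^ 2 + ∑ j, ∑ i, q j i * x j ^ 2
          - 2 * ∑ j, x j * ∑ i, q j i * x i := by
        simp only [Finset.mul_sum, ← Finset.sum_add_distrib, ← Finset.sum_sub_distrib]
        exact Finset.sum_congr rfl fun j _ => Finset.sum_congr rfl fun i _ => by ring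
    _ = 2 * ∑ j, x j * ((∑ i, q i j) * x j - ∑ i, q j i * x i) := by
        rw [sum_sum_flux_mul_source, sum_sum_flux_mul_target hbal]
        have hexpand : ∀ j, x j * ((∑ i, q i j) * x j - ∑ i, q j i * x i) =
            (∑ i, q i j) * x j ^ 2 - x j * ∑ i, q j i * x i := fun j => by ring
        rw [Finset.sum_congr rfl fun j _ => hexpand j, Finset.sum_sub_distrib]
        ring

theorem sq_sum_sum_flux_mul_le (hq : ∀ j i, 0 ≤ q j i) (hbal : ∀ j, ∑ i, q j i = ∑ i, q i j)
    (w : V → V → ℝ) (x : V → ℝ) :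
    (∑ j, ∑ i, q j i * w j i) ^ 2 ≤
      (∑ j, ∑ i, q j i) * ∑ j, ∑ i, q j i * (w j i + x i - x j) ^ 2 := by
  have hshift : ∑ j, ∑ i, q j i * w j i = ∑ j, ∑ i, q j i * (w j i + x i - x j) := by
    simp only [add_sub_assoc, mul_add, Finset.sum_add_distrib,
      sum_sum_flux_mul_sub_eq_zero hbal x, add_zero]
  rw [hshift]
  have := Finset.sum_sq_le_sum_mul_sum_of_sq_le_mul (Finset.univ : Finset (V × V))
    (r := fun e => q e.1 e.2 * (w e.1 e.2 + x e.2 - x e.1)) (fun e _ => hq e.1 e.2)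
    (fun e _ => mul_nonneg (hq e.1 e.2) (sq_nonneg (w e.1 e.2 + x e.2 - x e.1)))
    (fun e _ => le_of_eq (by ring))
  simp only [← Finset.univ_product_univ, Finset.sum_product] at this
  exact this

end BalancedFlux

section Ctmc

variable {V : Type} [DecidableEq V]

noncomputable def ctmcFlux (R : V → V → ℝ) (p : V → ℝ) (j i : V) : ℝ :=
  if j = i then 0 else R j i * p i

theorem ctmcFlux_nonneg {R : V → V → ℝ} {p : V → ℝ} (hR : ∀ j i, j ≠ i → 0 ≤ R j i)
    (hp0 : ∀ i, 0 ≤ p i) (j i : V) : 0 ≤ ctmcFlux R p j i := by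
  unfold ctmcFlux
  split_ifs with h
  · exact le_rfl
  · exact mul_nonneg (hR j i h) (hp0 i)

variable [Fintype V]

noncomputable def ctmcEscapeRate (R : V → V → ℝ) (i : V) : ℝ :=
  ∑ k, if k = i then (0 : ℝ) else R k i

noncomputable def ctmcActivity (R : V → V → ℝ) (p : V → ℝ) : ℝ :=
  ∑ i, ctmcEscapeRate R i * p i

theorem ctmcEscapeRate_mul (R : V → V → ℝ) (p : V → ℝ) (i : V) :
    ctmcEscapeRate R i * p i = ∑ j, ctmcFlux R p j i := by
  simp [ctmcEscapeRate, ctmcFlux, Finset.sum_mul, ite_mul]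

theorem ctmcActivity_eq_sum_flux (R : V → V → ℝ) (p : V → ℝ) :
    ctmcActivity R p = ∑ j, ∑ i, ctmcFlux R p j i := by
  rw [ctmcActivity, Finset.sum_comm]
  exact Finset.sum_congr rfl fun i _ => ctmcEscapeRate_mul R p i

theorem ctmcRateMatrix_mulVec_mul_apply (R : V → V → ℝ) (p x : V → ℝ) (j : V) :
    (ctmcRateMatrix R *ᵥ (p * x)) j =
      ∑ i, ctmcFlux R p j i * x i - ctmcEscapeRate R j * (p j * x j) := by
  have hdiag : ctmcEscapeRate R j * (p j * x j) =
      ∑ i, if j = i then ctmcEscapeRate R i * (p i * x i) else 0 := by simp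
  rw [hdiag, ← Finset.sum_sub_distrib]
  refine Finset.sum_congr rfl fun i _ => ?_
  by_cases h : j = i
  · subst h; simp [ctmcRateMatrix, ctmcFlux, ctmcEscapeRate]
  · simp [ctmcRateMatrix, ctmcFlux, h, mul_assoc]

theorem sum_ctmcRateMatrix_mulVec (R : V → V → ℝ) (z : V → ℝ) :
    ∑ j, (ctmcRateMatrix R *ᵥ z) j = 0 := by
  simp only [mulVec, dotProduct]
  rw [Finset.sum_comm]
  refine Finset.sum_eq_zero fun i _ => ?_
  rw [← Finset.sum_mul]
  simp [ctmcRateMatrix, Finset.sum_ite, Finset.filter_ne', Finset.filter_eq']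

theorem ctmcCurrentMatrix_mulVec_mul_apply (R w : V → V → ℝ) (p x : V → ℝ) (j : V) :
    (ctmcCurrentMatrix R w *ᵥ (p * x)) j = ∑ i, w j i * ctmcFlux R p j i * x i := by
  simp only [mulVec, dotProduct, ctmcCurrentMatrix, ctmcFlux, of_apply, Pi.mul_apply]
  refine Finset.sum_congr rfl fun i _ => ?_
  split_ifs <;> ring

theorem sum_ctmcCurrentMatrix_mulVec_mul (R w : V → V → ℝ) (p x : V → ℝ) :
    (fun _ => (1 : ℝ)) ⬝ᵥ (ctmcCurrentMatrix R w *ᵥ (p * x)) =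
      ∑ j, ∑ i, ctmcFlux R p j i * w j i * x i := by
  simp only [dotProduct, one_mul, ctmcCurrentMatrix_mulVec_mul_apply, mul_comm (w _ _)]

theorem ctmcAvgCurrent_eq_sum_flux (R w : V → V → ℝ) (p : V → ℝ) :
    ctmcAvgCurrent R w p = ∑ j, ∑ i, ctmcFlux R p j i * w j i := by
  have := sum_ctmcCurrentMatrix_mulVec_mul R w p 1
  simp only [Pi.one_apply, mul_one] at this
  exact this

variable {R : V → V → ℝ} {p : V → ℝ}

theorem ctmcFlux_balanced (hpstat : ctmcRateMatrix R *ᵥ p = 0) (j : V) :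
    ∑ i, ctmcFlux R p j i = ∑ i, ctmcFlux R p i j := by
  have := congrFun hpstat j
  rw [← mul_one p, ctmcRateMatrix_mulVec_mul_apply] at this
  simp only [Pi.one_apply, mul_one, Pi.zero_apply, ctmcEscapeRate_mul, sub_eq_zero] at this
  exact this

theorem ctmcFlux_eq_zero_of_apply_eq_zero (hR : ∀ j i, j ≠ i → 0 ≤ R j i) (hp0 : ∀ i, 0 ≤ p i)
    (hpstat : ctmcRateMatrix R *ᵥ p = 0) {j : V} (hj : p j = 0) (i : V) :
    ctmcFlux R p j i = 0 := by
  have hin : ∑ i, ctmcFlux R p j i = 0 := by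
    rw [ctmcFlux_balanced hpstat, ← ctmcEscapeRate_mul, hj, mul_zero]
  exact (Finset.sum_eq_zero_iff_of_nonneg fun i _ => ctmcFlux_nonneg hR hp0 j i).1 hin i
    (Finset.mem_univ i)

theorem ctmcRateMatrix_mulVec_apply_eq_zero (hR : ∀ j i, j ≠ i → 0 ≤ R j i)
    (hp0 : ∀ i, 0 ≤ p i) (hpstat : ctmcRateMatrix R *ᵥ p = 0) {z : V → ℝ}
    (hz : ∀ i, p i = 0 → z i = 0) {j : V} (hj : p j = 0) : (ctmcRateMatrix R *ᵥ z) j = 0 := by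
  refine Finset.sum_eq_zero fun i _ => ?_
  by_cases hji : j = i
  · subst hji; simp [hz j hj]
  by_cases hi : p i = 0
  · simp [hz i hi]
  have hflux := ctmcFlux_eq_zero_of_apply_eq_zero hR hp0 hpstat hj i
  simp only [ctmcFlux, hji, if_false, mul_eq_zero, hi, or_false] at hflux
  simp [ctmcRateMatrix, hji, hflux]

theorem ctmcActivity_le (hp0 : ∀ i, 0 ≤ p i) (hp1 : ∑ i, p i = 1) {c : ℝ}
    (hc : ∀ i, ctmcEscapeRate R i ≤ c) : ctmcActivity R p ≤ c :=
  calc ctmcActivity R p ≤ ∑ i, c * p i :=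
        Finset.sum_le_sum fun i _ => mul_le_mul_of_nonneg_right (hc i) (hp0 i)
    _ = c := by rw [← Finset.mul_sum, hp1, mul_one]

theorem ctmcEscapeRate_le_sum (hR : ∀ j i, 0 ≤ R j i) (i : V) :
    ctmcEscapeRate R i ≤ ∑ k, R k i :=
  Finset.sum_le_sum fun k _ => by split_ifs; exacts [hR k i, le_rfl]

end Ctmc

section PoissonEquation

open Set NormedSpace

variable {V : Type} [Fintype V] [DecidableEq V] {R : V → V → ℝ} {p : V → ℝ}

theorem ctmcNoiseIntegrand_mulVec (R : V → V → ℝ) (p : V → ℝ) (τ : ℝ) (v : V → ℝ) :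
    ctmcNoiseIntegrand R p τ *ᵥ v = exp (τ • ctmcRateMatrix R) *ᵥ v - (∑ i, v i) • p := by
  rw [ctmcNoiseIntegrand, sub_mulVec]
  congr 1
  ext j
  simp [mulVec, dotProduct, vecMulVec_apply, Finset.mul_sum, mul_comm]

theorem integrableOn_ctmcNoiseIntegrand_mulVec (hconv : ctmcNoiseConv R p) (v : V → ℝ) :
    IntegrableOn (fun τ => ctmcNoiseIntegrand R p τ *ᵥ v) (Ioi 0) :=
  Integrable.of_eval fun j => integrable_finsetSum _ fun i _ => (hconv j i).mul_const (v i)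

theorem ctmcNoiseQ_mulVec (hconv : ctmcNoiseConv R p) (v : V → ℝ) :
    ctmcNoiseQ R p *ᵥ v = ∫ τ in Ioi 0, ctmcNoiseIntegrand R p τ *ᵥ v := by
  ext j
  rw [eval_integral fun j => (integrableOn_ctmcNoiseIntegrand_mulVec hconv v).eval j]
  simp only [mulVec, dotProduct, ctmcNoiseQ, of_apply, ← integral_mul_const]
  rw [integral_finsetSum _ fun i _ => (hconv j i).mul_const (v i)]

theorem ctmcRateMatrix_mulVec_ctmcNoiseQ_mulVec (hpstat : ctmcRateMatrix R *ᵥ p = 0)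
    (hconv : ctmcNoiseConv R p) (v : V → ℝ) :
    ctmcRateMatrix R *ᵥ (ctmcNoiseQ R p *ᵥ v) = (∑ i, v i) • p - v := by
  set L := ctmcRateMatrix R
  set h := fun τ => ctmcNoiseIntegrand R p τ *ᵥ v
  have hint : IntegrableOn h (Ioi 0) := integrableOn_ctmcNoiseIntegrand_mulVec hconv v
  have hderiv : ∀ t, HasDerivAt h (L *ᵥ h t) t := fun t => by
    simpa [h, ctmcNoiseIntegrand_mulVec, mulVec_sub, mulVec_smul, hpstat] using
      (L.hasDerivAt_exp_smul_mulVec v t).sub_const ((∑ i, v i) • p)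
  let Lc : (V → ℝ) →L[ℝ] V → ℝ := LinearMap.toContinuousLinearMap L.mulVecLin
  have hint' : IntegrableOn (fun t => L *ᵥ h t) (Ioi 0) := Lc.integrable_comp hint
  calc L *ᵥ (ctmcNoiseQ R p *ᵥ v) = ∫ t in Ioi 0, L *ᵥ h t := by
        rw [ctmcNoiseQ_mulVec hconv]; exact (Lc.integral_comp_comm hint).symm
    _ = 0 - h 0 := integral_Ioi_of_hasDerivAt_of_tendsto' (fun t _ => hderiv t) hint'
        (tendsto_zero_of_hasDerivAt_of_integrableOn_Ioi (fun t _ => hderiv t) hint' hint)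
    _ = (∑ i, v i) • p - v := by simp [h, ctmcNoiseIntegrand_mulVec]

theorem ctmcNoiseQ_mulVec_mem {S : Submodule ℝ (V → ℝ)}
    (hS : ∀ z ∈ S, ctmcRateMatrix R *ᵥ z ∈ S) (hpstat : ctmcRateMatrix R *ᵥ p = 0)
    (hconv : ctmcNoiseConv R p) {v : V → ℝ} (hv : v - (∑ i, v i) • p ∈ S) :
    ctmcNoiseQ R p *ᵥ v ∈ S := by
  rw [ctmcNoiseQ_mulVec hconv]
  refine integral_mem_submodule S (integrableOn_ctmcNoiseIntegrand_mulVec hconv v) fun τ => ?_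
  have hp : exp (τ • ctmcRateMatrix R) *ᵥ p = p :=
    exp_mulVec_of_mulVec_eq_zero (by rw [smul_mulVec, hpstat, smul_zero])
  rw [ctmcNoiseIntegrand_mulVec, ← hp, ← mulVec_smul, ← mulVec_sub]
  exact exp_mulVec_mem (fun z hz => by rw [smul_mulVec]; exact S.smul_mem τ (hS z hz)) hv

end PoissonEquation

section KineticUncertainty

variable {V : Type} [Fintype V] [DecidableEq V] {R : V → V → ℝ} {p : V → ℝ}

theorem ctmcNoise_eq_sum_flux_mul_sq (hpstat : ctmcRateMatrix R *ᵥ p = 0)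
    (hconv : ctmcNoiseConv R p) (w : V → V → ℝ) {x : V → ℝ}
    (hQ : ctmcNoiseQ R p *ᵥ (ctmcCurrentMatrix R w *ᵥ p) = p * x) (hx : ∑ j, p j * x j = 0) :
    ctmcNoise R w p = ∑ j, ∑ i, ctmcFlux R p j i * (w j i + x i - x j) ^ 2 := by
  set q := ctmcFlux R p with hq
  set v := ctmcCurrentMatrix R w *ᵥ p
  have hbal := ctmcFlux_balanced hpstat
  have hpoisson := ctmcRateMatrix_mulVec_ctmcNoiseQ_mulVec hpstat hconv v
  rw [hQ] at hpoisson
  have hv : ∀ j, ∑ i, q j i * w j i = v j := fun j => by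
    simpa [mul_comm] using (ctmcCurrentMatrix_mulVec_mul_apply R w p 1 j).symm
  have htarget : 2 * ∑ j, ∑ i, q j i * w j i * x j = ∑ j, ∑ i, q j i * (x i - x j) ^ 2 := by
    have hvj : ∀ j, x j * v j = (∑ i, v i) * (p j * x j) +
        x j * ((∑ i, q i j) * x j - ∑ i, q j i * x i) := fun j => by
      have := congrFun hpoisson j
      rw [ctmcRateMatrix_mulVec_mul_apply, ← mul_assoc, ctmcEscapeRate_mul] at this
      simp only [Pi.sub_apply, Pi.smul_apply, smul_eq_mul, ← hq] at this
      linear_combination x j * this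
    calc 2 * ∑ j, ∑ i, q j i * w j i * x j = 2 * ∑ j, x j * v j := by
          refine congrArg (2 * ·) (Finset.sum_congr rfl fun j _ => ?_)
          rw [← hv j, Finset.mul_sum]
          exact Finset.sum_congr rfl fun i _ => by ring
      _ = ∑ j, ∑ i, q j i * (x i - x j) ^ 2 := by
          rw [Finset.sum_congr rfl fun j _ => hvj j, Finset.sum_add_distrib, ← Finset.mul_sum, hx,
            mul_zero, zero_add, sum_sum_flux_mul_sub_sq hbal]
  have hsquare : ∑ j, ∑ i, q j i * (w j i + x i - x j) ^ 2 =
      ∑ j, ∑ i, q j i * w j i ^ 2 + 2 * ∑ j, ∑ i, q j i * w j i * x i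
        - 2 * ∑ j, ∑ i, q j i * w j i * x j + ∑ j, ∑ i, q j i * (x i - x j) ^ 2 := by
    simp only [Finset.mul_sum, ← Finset.sum_add_distrib, ← Finset.sum_sub_distrib]
    exact Finset.sum_congr rfl fun j _ => Finset.sum_congr rfl fun i _ => by ring
  rw [hsquare, ← htarget, ctmcNoise, hQ, sum_ctmcCurrentMatrix_mulVec_mul]
  have := sum_ctmcCurrentMatrix_mulVec_mul R (fun j i => w j i ^ 2) p 1
  simp only [Pi.one_apply, mul_one] at this
  rw [this]
  ring

theorem ctmcAvgCurrent_sq_le_activity_mul_noise (hR : ∀ j i, j ≠ i → 0 ≤ R j i)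
    (hp0 : ∀ i, 0 ≤ p i) (hp1 : ∑ i, p i = 1) (hpstat : ctmcRateMatrix R *ᵥ p = 0)
    (w : V → V → ℝ) (hconv : ctmcNoiseConv R p) :
    ctmcAvgCurrent R w p ^ 2 ≤ ctmcActivity R p * ctmcNoise R w p := by
  set v := ctmcCurrentMatrix R w *ᵥ p
  set y := ctmcNoiseQ R p *ᵥ v
  let S : Submodule ℝ (V → ℝ) :=
    LinearMap.ker (∑ j, LinearMap.proj j) ⊓ Submodule.pi {j | p j = 0} fun _ => ⊥
  have hmem : ∀ z, z ∈ S ↔ ∑ j, z j = 0 ∧ ∀ j, p j = 0 → z j = 0 := fun z => by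
    simp [S]
  have hS : ∀ z ∈ S, ctmcRateMatrix R *ᵥ z ∈ S := fun z hz => (hmem _).2
    ⟨sum_ctmcRateMatrix_mulVec R z,
      fun j hj => ctmcRateMatrix_mulVec_apply_eq_zero hR hp0 hpstat ((hmem z).1 hz).2 hj⟩
  have hvS : v - (∑ i, v i) • p ∈ S := by
    refine (hmem _).2 ⟨?_, fun j hj => ?_⟩
    · simp [Finset.sum_sub_distrib, ← Finset.mul_sum, hp1]
    · simp only [Pi.sub_apply, Pi.smul_apply, smul_eq_mul, hj, mul_zero, sub_zero, v]
      rw [← mul_one p, ctmcCurrentMatrix_mulVec_mul_apply]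
      simp [ctmcFlux_eq_zero_of_apply_eq_zero hR hp0 hpstat hj]
  obtain ⟨hy_sum, hy_supp⟩ : ∑ j, y j = 0 ∧ ∀ j, p j = 0 → y j = 0 :=
    (hmem y).1 (ctmcNoiseQ_mulVec_mem hS hpstat hconv hvS)
  have hyx : y = p * (y / p) := funext fun j => by
    by_cases hj : p j = 0
    · simp [hj, hy_supp j hj]
    · simp [mul_div_cancel₀ _ hj]
  have hx : ∑ j, p j * (y / p) j = 0 := by
    simpa only [← Pi.mul_apply, ← hyx] using hy_sum
  rw [ctmcAvgCurrent_eq_sum_flux, ctmcNoise_eq_sum_flux_mul_sq hpstat hconv w hyx hx,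
    ctmcActivity_eq_sum_flux]
  exact sq_sum_sum_flux_mul_le (ctmcFlux_nonneg hR hp0) (ctmcFlux_balanced hpstat) w (y / p)

end KineticUncertainty

section Clockwork

variable {G : ℕ} {M : Type} [DecidableEq M] {d : Fin G → ℕ} [∀ a, NeZero (d a)]
  {γ : (a : Fin G) → M → Fin (d a) → ℝ} {u : M → (a : Fin G) → Fin (d a) → M}

def clockworkRate (γ : (a : Fin G) → M → Fin (d a) → ℝ) (u : M → (a : Fin G) → Fin (d a) → M)
    (x' x : ((a : Fin G) → Fin (d a)) × M) : ℝ :=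
  ∑ a : Fin G,
    if x'.1 = Function.update x.1 a (x.1 a + 1) ∧ x'.2 = u x.2 a (x.1 a)
    then γ a x.2 (x.1 a) else 0

theorem clockworkRate_nonneg (hγ : ∀ a m i, 0 ≤ γ a m i) (x' x : ((a : Fin G) → Fin (d a)) × M) :
    0 ≤ clockworkRate γ u x' x :=
  Finset.sum_nonneg fun a _ => by split_ifs; exacts [hγ a x.2 (x.1 a), le_rfl]

theorem sum_clockworkRate [Fintype M] (x : ((a : Fin G) → Fin (d a)) × M) :
    ∑ x', clockworkRate γ u x' x = ∑ a, γ a x.2 (x.1 a) := by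
  unfold clockworkRate
  rw [Finset.sum_comm]
  refine Finset.sum_congr rfl fun a _ => ?_
  simp_rw [← Prod.ext_iff (y := (Function.update x.1 a (x.1 a + 1), u x.2 a (x.1 a)))]
  simp

end Clockwork

theorem classical_snr_bound_general_dim_general
    (G : ℕ)
    (M : Type) [Fintype M] [DecidableEq M] [Nonempty M]
    (Jt : Set ℝ) (hJtsub : Jt ⊆ Set.Ici 0)
    (d : Fin G → ℕ) [∀ a, NeZero (d a)]
    (γ : (a : Fin G) → M → Fin (d a) → ℝ) (hγ : ∀ a m i, γ a m i ∈ Jt)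
    (u : M → (a : Fin G) → Fin (d a) → M)
    -- the jump rates of the chain on `(Π a, Fin (d a)) × M`
    (R : (((a : Fin G) → Fin (d a)) × M) → (((a : Fin G) → Fin (d a)) × M) → ℝ)
    (hR : ∀ x' x : ((a : Fin G) → Fin (d a)) × M, R x' x =
      ∑ a : Fin G,
        if x'.1 = Function.update x.1 a (x.1 a + 1) ∧ x'.2 = u x.2 a (x.1 a)
        then γ a x.2 (x.1 a) else 0)
    -- a stationary distribution
    (p : (((a : Fin G) → Fin (d a)) × M) → ℝ)
    (hp0 : ∀ x, 0 ≤ p x) (hp1 : ∑ x, p x = 1)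
    (hpstat : ctmcRateMatrix R *ᵥ p = 0)
    -- arbitrary real weights on the jumps
    (w : (((a : Fin G) → Fin (d a)) × M) → (((a : Fin G) → Fin (d a)) × M) → ℝ)
    -- convergence of the improper integral defining the noise, and positivity of the noise
    (hconv : ctmcNoiseConv R p)
    (hD : 0 < ctmcNoise R w p) :
    ctmcAvgCurrent R w p ^ 2 / ctmcNoise R w p ≤
      Finset.univ.sup' Finset.univ_nonempty
        (fun mi : M × ((a : Fin G) → Fin (d a)) => ∑ a, γ a mi.1 (mi.2 a)) := by
  obtain rfl : R = clockworkRate γ u := funext₂ hR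
  have hR0 := clockworkRate_nonneg (u := u) fun a m i => hJtsub (hγ a m i)
  have hA : ctmcActivity (clockworkRate γ u) p ≤ Finset.univ.sup' Finset.univ_nonempty
      (fun mi : M × ((a : Fin G) → Fin (d a)) => ∑ a, γ a mi.1 (mi.2 a)) :=
    ctmcActivity_le hp0 hp1 fun x => (ctmcEscapeRate_le_sum hR0 x).trans <|
      (sum_clockworkRate x).trans_le <| Finset.le_sup'
        (fun mi : M × ((a : Fin G) → Fin (d a)) => ∑ a, γ a mi.1 (mi.2 a))
        (Finset.mem_univ (x.2, x.1))
  rw [div_le_iff₀ hD]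
  exact (ctmcAvgCurrent_sq_le_activity_mul_noise (fun j i _ => hR0 j i) hp0 hp1 hpstat w
    hconv).trans (mul_le_mul_of_nonneg_right hA hD.le)

/-- **Classical no-go bound for clockworks of arbitrary dimensions.**
For `G ≥ 1` classical clockworks of dimensions `d₁,…,d_G ≥ 2` controlled by a feedback policy
with finite nonempty memory `M`, allowed rates in a nonempty set `J̃ ⊆ [0,∞)`, parameter-update
functions `γ⁽ᵃ⁾ : M → J̃^{dₐ}` and an arbitrary memory-update function `u`, consider the
continuous-time Markov chain on `({0,…,d₁−1} × ⋯ × {0,…,d_G−1}) × M` whose only jumps replace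
the `a`-th component `cₐ` by `cₐ + 1 (mod dₐ)` and update the memory to `u(m,a,cₐ)`, at rate
`γ⁽ᵃ⁾_{cₐ}(m)`. For any stationary distribution `p`, any real weights `w` on the jumps and the
resulting asymptotic average current `F`, noise `D > 0` (with the noise integral convergent
entrywise) and signal-to-noise ratio `S = F²/D`, one has
`S ≤ max_{m∈M} max_{i} Σₐ γ⁽ᵃ⁾_{iₐ}(m)`. -/
theorem classical_snr_bound_general_dim
    (G : ℕ) (hG : 1 ≤ G)
    (M : Type) [Fintype M] [DecidableEq M] [Nonempty M]
    (Jt : Set ℝ) (hJtne : Jt.Nonempty) (hJtsub : Jt ⊆ Set.Ici 0)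
    (d : Fin G → ℕ) (hd : ∀ a, 2 ≤ d a) [∀ a, NeZero (d a)]
    (γ : (a : Fin G) → M → Fin (d a) → ℝ) (hγ : ∀ a m i, γ a m i ∈ Jt)
    (u : M → (a : Fin G) → Fin (d a) → M)
    -- the jump rates of the chain on `(Π a, Fin (d a)) × M`
    (R : (((a : Fin G) → Fin (d a)) × M) → (((a : Fin G) → Fin (d a)) × M) → ℝ)
    (hR : ∀ x' x : ((a : Fin G) → Fin (d a)) × M, R x' x =
      ∑ a : Fin G,
        if x'.1 = Function.update x.1 a (x.1 a + 1) ∧ x'.2 = u x.2 a (x.1 a)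
        then γ a x.2 (x.1 a) else 0)
    -- a stationary distribution
    (p : (((a : Fin G) → Fin (d a)) × M) → ℝ)
    (hp0 : ∀ x, 0 ≤ p x) (hp1 : ∑ x, p x = 1)
    (hpstat : ctmcRateMatrix R *ᵥ p = 0)
    -- arbitrary real weights on the jumps
    (w : (((a : Fin G) → Fin (d a)) × M) → (((a : Fin G) → Fin (d a)) × M) → ℝ)
    -- convergence of the improper integral defining the noise, and positivity of the noise
    (hconv : ctmcNoiseConv R p)
    (hD : 0 < ctmcNoise R w p) :
    ctmcAvgCurrent R w p ^ 2 / ctmcNoise R w p ≤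
      Finset.univ.sup' Finset.univ_nonempty
        (fun mi : M × ((a : Fin G) → Fin (d a)) => ∑ a, γ a mi.1 (mi.2 a)) :=
  classical_snr_bound_general_dim_general G M Jt hJtsub d γ hγ u R hR p hp0 hp1 hpstat w hconv hD
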